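/- Let r ≥ 1 be an integer and let q : ℝ → ℝ be a continuous 2π-periodic function satisfying (r-1)² < q(t) < r² for all t ∈ ℝ. Then the only C² 2π-periodic function h : ℝ → ℝ satisfying -h''(t) = q(t) h(t) for all t ∈ ℝ is h ≡ 0. -/

import Mathlib

/-!
Sturm comparison. For a nontrivial solution all zeros are simple (uniqueness for the linear
ODE), so zeros come in a sequence of consecutive ones along which `h'` alternates in sign.
The Wronskian of `h` with `sin (ω (t - a))` shows that consecutive zeros are more than `π / r`
apart since `q < r²`, and less than `π / (r - 1)` apart since `q > (r - 1)²`. Hence the zero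
`a + 2π` is the `(2r - 1)`-st zero after the zero `a`, and the odd index makes `h'(a + 2π)` and
`h'(a)` of opposite signs, contradicting periodicity.
-/

open Real Set Filter Topology
open scoped NNReal

theorem Function.Periodic.deriv {𝕜 F : Type*} [NontriviallyNormedField 𝕜]
    [NormedAddCommGroup F] [NormedSpace 𝕜 F] {f : 𝕜 → F} {c : 𝕜} (hf : Function.Periodic f c) :
    Function.Periodic (deriv f) c := fun x => by
  rw [← deriv_comp_add_const, show (fun x => f (x + c)) = f from funext hf]

theorem IsPreconnected.forall_pos_or_forall_neg {X : Type*} [TopologicalSpace X] {s : Set X}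
    {f : X → ℝ} (hs : IsPreconnected s) (hf : ContinuousOn f s) (hne : ∀ x ∈ s, f x ≠ 0) :
    (∀ x ∈ s, 0 < f x) ∨ ∀ x ∈ s, f x < 0 := by
  by_contra! ⟨⟨x, hx, hfx⟩, y, hy, hfy⟩
  obtain ⟨z, hz, hfz⟩ := hs.intermediate_value hx hy hf ⟨hfx, hfy⟩
  exact hne z hz hfz

theorem HasDerivAt.nonpos_of_forall_Ioo_le {f : ℝ → ℝ} {f' a b : ℝ} (hf : HasDerivAt f f' b)
    (hab : a < b) (hle : ∀ t ∈ Ioo a b, f b ≤ f t) : f' ≤ 0 := by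
  refine le_of_tendsto (hasDerivAt_iff_tendsto_slope_left_right.mp hf).1 ?_
  filter_upwards [Ioo_mem_nhdsLT hab] with t ht
  rw [slope_def_field]
  exact div_nonpos_of_nonneg_of_nonpos (sub_nonneg.mpr (hle t ht)) (sub_nonpos.mpr ht.2.le)

theorem HasDerivAt.nonneg_of_forall_Ioo_le {f : ℝ → ℝ} {f' a b : ℝ} (hf : HasDerivAt f f' a)
    (hab : a < b) (hle : ∀ t ∈ Ioo a b, f a ≤ f t) : 0 ≤ f' := by
  refine ge_of_tendsto (hasDerivAt_iff_tendsto_slope_left_right.mp hf).2 ?_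
  filter_upwards [Ioo_mem_nhdsGT hab] with t ht
  rw [slope_def_field]
  exact div_nonneg (sub_nonneg.mpr (hle t ht)) (sub_nonneg.mpr ht.1.le)

structure ConsecutiveZeros (f : ℝ → ℝ) (a b : ℝ) : Prop where
  lt : a < b
  left : f a = 0
  right : f b = 0
  ne_zero : ∀ t ∈ Ioo a b, f t ≠ 0

theorem Continuous.exists_consecutiveZeros {f : ℝ → ℝ} (hf : Continuous f) {a c : ℝ}
    (hac : a < c) (ha : f a = 0) (hc : f c = 0) (hiso : ∀ᶠ t in 𝓝[>] a, f t ≠ 0) :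
    ∃ b, ConsecutiveZeros f a b := by
  obtain ⟨u, hau, hu⟩ := mem_nhdsGT_iff_exists_Ioo_subset.mp hiso
  have huc : u ≤ c := not_lt.mp fun hcu => hu ⟨hac, hcu⟩ hc
  set S := {t | f t = 0} ∩ Icc u c
  have hS : sInf S ∈ S := (isClosed_eq hf continuous_const).inter isClosed_Icc |>.csInf_mem
    ⟨c, hc, huc, le_rfl⟩ ⟨u, fun t ht => ht.2.1⟩
  refine ⟨sInf S, hau.trans_le hS.2.1, ha, hS.1, fun t ht hft => ?_⟩
  rcases lt_or_ge t u with htu | htu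
  · exact hu ⟨ht.1, htu⟩ hft
  · exact ht.2.not_ge (csInf_le ⟨u, fun t ht => ht.2.1⟩ ⟨hft, htu, ht.2.le.trans hS.2.2⟩)

namespace ConsecutiveZeros

variable {f : ℝ → ℝ} {a b c : ℝ}

theorem forall_pos_or_forall_neg (hab : ConsecutiveZeros f a b) (hf : Continuous f) :
    (∀ t ∈ Ioo a b, 0 < f t) ∨ ∀ t ∈ Ioo a b, f t < 0 :=
  isPreconnected_Ioo.forall_pos_or_forall_neg hf.continuousOn hab.ne_zero

theorem neg (hab : ConsecutiveZeros f a b) : ConsecutiveZeros (-f) a b :=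
  ⟨hab.lt, by simp [hab.left], by simp [hab.right], fun t ht => by simpa using hab.ne_zero t ht⟩

theorem eq_of_lt_of_lt (hab : ConsecutiveZeros f a b) (hbc : ConsecutiveZeros f b c) {x : ℝ}
    (hx : f x = 0) (hax : a < x) (hxc : x < c) : x = b := by
  by_contra hxb
  rcases lt_or_gt_of_ne hxb with h | h
  · exact hab.ne_zero x ⟨hax, h⟩ hx
  · exact hbc.ne_zero x ⟨h, hxc⟩ hx

end ConsecutiveZeros

theorem add_mul_lt_of_forall_add_lt {z : ℕ → ℝ} {d : ℝ} (hz : ∀ n, z n + d < z (n + 1)) :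
    ∀ n ≠ 0, z 0 + n * d < z n := by
  intro n hn
  induction n with
  | zero => exact absurd rfl hn
  | succ n ih =>
    rcases eq_or_ne n 0 with rfl | hn'
    · simpa using hz 0
    · push_cast; linarith [ih hn', hz n]

theorem lt_add_mul_of_forall_lt_add {z : ℕ → ℝ} {d : ℝ} (hz : ∀ n, z (n + 1) < z n + d) :
    ∀ n ≠ 0, z n < z 0 + n * d := by
  intro n hn
  have := add_mul_lt_of_forall_add_lt (z := fun n => -z n) (d := -d)
    (fun n => by linarith [hz n]) n hn
  linarith

theorem neg_one_pow_mul_pos_of_forall_mul_neg {u : ℕ → ℝ} (hu : ∀ n, u n * u (n + 1) < 0) :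
    ∀ n, 0 < (-1) ^ n * (u 0 * u n) := by
  intro n
  induction n with
  | zero => simpa using mul_self_pos.mpr (left_ne_zero_of_mul (hu 0).ne)
  | succ n ih =>
    have hsq : 0 < u n ^ 2 := pow_two_pos_of_ne_zero (left_ne_zero_of_mul (hu n).ne)
    have hprod : 0 < (-1) ^ (n + 1) * (u 0 * u (n + 1)) * u n ^ 2 := by
      calc 0 < (-1) ^ n * (u 0 * u n) * -(u n * u (n + 1)) := mul_pos ih (neg_pos.mpr (hu n))
        _ = _ := by ring
    exact (pos_iff_pos_of_mul_pos hprod).mpr hsq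

theorem sin_mul_sub_pos {ω a t : ℝ} (hω : 0 < ω) (ht : t ∈ Ioo a (a + π / ω)) :
    0 < sin (ω * (t - a)) :=
  sin_pos_of_pos_of_lt_pi (mul_pos hω (sub_pos.2 ht.1)) ((lt_div_iff₀' hω).1 (by linarith [ht.2]))

structure IsHillSolution (q h : ℝ → ℝ) : Prop where
  differentiable : Differentiable ℝ h
  hasDerivAt_deriv : ∀ t, HasDerivAt (deriv h) (-(q t * h t)) t

-- The Wronskian `h' φ - h φ'` of `h` with `φ t = sin (ω (t - a))`, a solution of `φ'' + ω² φ = 0`.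
noncomputable def sinWronskian (h : ℝ → ℝ) (ω a t : ℝ) : ℝ :=
  deriv h t * sin (ω * (t - a)) - h t * (ω * cos (ω * (t - a)))

namespace IsHillSolution

variable {q h : ℝ → ℝ}

theorem hasDerivAt (hh : IsHillSolution q h) (t : ℝ) : HasDerivAt h (deriv h t) t :=
  (hh.differentiable t).hasDerivAt

theorem continuous (hh : IsHillSolution q h) : Continuous h :=
  hh.differentiable.continuous

theorem neg (hh : IsHillSolution q h) : IsHillSolution q (-h) := by
  refine ⟨hh.differentiable.neg, fun t => ?_⟩
  rw [deriv.neg']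
  exact (hh.hasDerivAt_deriv t).neg.congr_deriv (by simp)

theorem eq_zero_of_eq_zero_of_deriv_eq_zero (hh : IsHillSolution q h) {M : ℝ≥0}
    (hq : ∀ t, |q t| ≤ M) {t₀ : ℝ} (h0 : h t₀ = 0) (h0' : deriv h t₀ = 0) : h = 0 := by
  have hv : ∀ t, LipschitzWith (max 1 M) (fun p : ℝ × ℝ => (p.2, -(q t * p.1))) := fun t => by
    have hmul : LipschitzWith M (fun x : ℝ => -(q t * x)) := .of_dist_le_mul fun x y => by
      rw [Real.dist_eq, Real.dist_eq, neg_sub_neg, ← mul_sub, abs_mul, abs_sub_comm]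
      exact mul_le_mul_of_nonneg_right (hq t) (abs_nonneg _)
    simpa using LipschitzWith.prod_snd.prodMk (hmul.comp LipschitzWith.prod_fst)
  have hsol := ODE_solution_unique_univ (fun t => (hv t).lipschitzOnWith (s := univ))
    (f := fun t => (h t, deriv h t)) (g := 0) (t₀ := t₀)
    (fun t => ⟨(hh.hasDerivAt t).prodMk (hh.hasDerivAt_deriv t), trivial⟩)
    (fun t => ⟨(hasDerivAt_const t (0 : ℝ × ℝ)).congr_deriv (by simp [Prod.zero_eq_mk]), trivial⟩)
    (by simp [h0, h0'])
  funext t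
  exact congrArg Prod.fst (congrFun hsol t)

theorem deriv_ne_zero_of_eq_zero (hh : IsHillSolution q h) {M : ℝ≥0} (hq : ∀ t, |q t| ≤ M)
    (hne : h ≠ 0) {t : ℝ} (ht : h t = 0) : deriv h t ≠ 0 :=
  fun h' => hne (hh.eq_zero_of_eq_zero_of_deriv_eq_zero hq ht h')

theorem exists_eq_zero (hh : IsHillSolution q h) (hq : ∀ t, 0 < q t) {T : ℝ} (hT : T ≠ 0)
    (hper : Function.Periodic h T) : ∃ a, h a = 0 := by
  by_contra! hne
  have hinj : Function.Injective (deriv h) := by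
    rcases isPreconnected_univ.forall_pos_or_forall_neg hh.continuous.continuousOn
      (fun t _ => hne t) with hpos | hneg
    · refine (strictAnti_of_deriv_neg fun t => ?_).injective
      rw [(hh.hasDerivAt_deriv t).deriv]
      exact neg_neg_of_pos (mul_pos (hq t) (hpos t trivial))
    · refine (strictMono_of_deriv_pos fun t => ?_).injective
      rw [(hh.hasDerivAt_deriv t).deriv]
      exact neg_pos.2 (mul_neg_of_pos_of_neg (hq t) (hneg t trivial))
  exact hT (by simpa using hinj (hper.deriv 0))

theorem hasDerivAt_sinWronskian (hh : IsHillSolution q h) (ω a t : ℝ) :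
    HasDerivAt (sinWronskian h ω a) ((ω ^ 2 - q t) * (h t * sin (ω * (t - a)))) t := by
  have hlin : HasDerivAt (fun t => ω * (t - a)) ω t := by
    simpa using ((hasDerivAt_id t).sub_const a).const_mul ω
  exact (((hh.hasDerivAt_deriv t).mul hlin.sin).sub
    ((hh.hasDerivAt t).mul (hlin.cos.const_mul ω))).congr_deriv (by ring)

theorem continuous_sinWronskian (hh : IsHillSolution q h) (ω a : ℝ) :
    Continuous (sinWronskian h ω a) :=
  continuous_iff_continuousAt.2 fun t => (hh.hasDerivAt_sinWronskian ω a t).continuousAt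

theorem not_forall_pos_Ioo (hh : IsHillSolution q h) {s : ℝ} (hs : 0 < s)
    (hq : ∀ t, s ^ 2 < q t) (a : ℝ) : ¬ ∀ t ∈ Ioo a (a + π / s), 0 < h t := by
  intro hpos
  set c := a + π / s
  have hac : a < c := lt_add_of_pos_right a (div_pos pi_pos hs)
  have hnonneg : ∀ t ∈ Icc a c, 0 ≤ h t := by
    rw [← closure_Ioo hac.ne]
    exact closure_minimal (fun t ht => (hpos t ht).le) (isClosed_le continuous_const hh.continuous)
  have hanti : StrictAntiOn (sinWronskian h s a) (Icc a c) :=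
    strictAntiOn_of_deriv_neg (convex_Icc a c) (hh.continuous_sinWronskian s a).continuousOn
      fun t ht => by
        rw [interior_Icc] at ht
        rw [(hh.hasDerivAt_sinWronskian s a t).deriv]
        exact mul_neg_of_neg_of_pos (by linarith [hq t])
          (mul_pos (hpos t ht) (sin_mul_sub_pos hs ht))
  have hsc : s * (c - a) = π := by simp only [c]; field_simp; ring
  have := hanti (left_mem_Icc.2 hac.le) (right_mem_Icc.2 hac.le) hac
  simp only [sinWronskian, hsc, sub_self, mul_zero, sin_zero, cos_zero, sin_pi, cos_pi] at this
  -- The Wronskian is `-s h(a) ≤ 0` at `a` and `s h(c) ≥ 0` at `c`, yet strictly decreasing.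
  nlinarith [hnonneg a (left_mem_Icc.2 hac.le), hnonneg c (right_mem_Icc.2 hac.le)]

theorem exists_zero_mem_Ioo (hh : IsHillSolution q h) {s : ℝ} (hs : 0 < s)
    (hq : ∀ t, s ^ 2 < q t) (a : ℝ) : ∃ t ∈ Ioo a (a + π / s), h t = 0 := by
  by_contra! hne
  rcases isPreconnected_Ioo.forall_pos_or_forall_neg hh.continuous.continuousOn hne with
    hpos | hneg
  · exact hh.not_forall_pos_Ioo hs hq a hpos
  · exact hh.neg.not_forall_pos_Ioo hs hq a fun t ht => by simpa using hneg t ht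

end IsHillSolution

namespace ConsecutiveZeros

variable {q h : ℝ → ℝ} {a b : ℝ}

theorem lt_add_pi_div (hab : ConsecutiveZeros h a b) (hh : IsHillSolution q h) {s : ℝ}
    (hs : 0 < s) (hq : ∀ t, s ^ 2 < q t) : b < a + π / s := by
  obtain ⟨t, ht, h0⟩ := hh.exists_zero_mem_Ioo hs hq a
  exact (not_lt.1 fun htb => hab.ne_zero t ⟨ht.1, htb⟩ h0).trans_lt ht.2

theorem add_pi_div_lt_of_forall_pos (hab : ConsecutiveZeros h a b) (hh : IsHillSolution q h)
    {ω : ℝ} (hω : 0 < ω) (hq : ∀ t, q t < ω ^ 2) (hpos : ∀ t ∈ Ioo a b, 0 < h t) :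
    a + π / ω < b := by
  obtain ⟨hlt, ha, hb, -⟩ := hab
  by_contra! hba
  have hmono : StrictMonoOn (sinWronskian h ω a) (Icc a b) :=
    strictMonoOn_of_deriv_pos (convex_Icc a b) (hh.continuous_sinWronskian ω a).continuousOn
      fun t ht => by
        rw [interior_Icc] at ht
        rw [(hh.hasDerivAt_sinWronskian ω a t).deriv]
        exact mul_pos (by linarith [hq t])
          (mul_pos (hpos t ht) (sin_mul_sub_pos hω ⟨ht.1, ht.2.trans_le hba⟩))
  have hb' : deriv h b ≤ 0 :=
    (hh.hasDerivAt b).nonpos_of_forall_Ioo_le hlt fun t ht => hb ▸ (hpos t ht).le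
  have hsin : 0 ≤ sin (ω * (b - a)) :=
    sin_nonneg_of_nonneg_of_le_pi (by nlinarith) ((le_div_iff₀' hω).1 (by linarith))
  have := hmono (left_mem_Icc.2 hlt.le) (right_mem_Icc.2 hlt.le) hlt
  simp only [sinWronskian, ha, hb, sub_self, mul_zero, sin_zero, zero_mul, sub_zero] at this
  -- The Wronskian vanishes at `a`, is `h'(b) sin (ω (b - a)) ≤ 0` at `b`, yet strictly increases.
  nlinarith [mul_nonpos_of_nonpos_of_nonneg hb' hsin]

theorem add_pi_div_lt (hab : ConsecutiveZeros h a b) (hh : IsHillSolution q h) {ω : ℝ}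
    (hω : 0 < ω) (hq : ∀ t, q t < ω ^ 2) : a + π / ω < b := by
  rcases hab.forall_pos_or_forall_neg hh.continuous with hpos | hneg
  · exact hab.add_pi_div_lt_of_forall_pos hh hω hq hpos
  · exact hab.neg.add_pi_div_lt_of_forall_pos hh.neg hω hq fun t ht => by simpa using hneg t ht

theorem deriv_mul_deriv_neg (hab : ConsecutiveZeros h a b) (hh : IsHillSolution q h)
    {M : ℝ≥0} (hq : ∀ t, |q t| ≤ M) (hne : h ≠ 0) : deriv h a * deriv h b < 0 := by
  have key : ∀ {g : ℝ → ℝ}, IsHillSolution q g → g ≠ 0 → ConsecutiveZeros g a b →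
      (∀ t ∈ Ioo a b, 0 < g t) → deriv g a * deriv g b < 0 := by
    rintro g hg hg0 ⟨hlt, ha, hb, -⟩ hpos
    refine mul_neg_of_pos_of_neg
      (lt_of_le_of_ne ?_ (hg.deriv_ne_zero_of_eq_zero hq hg0 ha).symm)
      (lt_of_le_of_ne ?_ (hg.deriv_ne_zero_of_eq_zero hq hg0 hb))
    · exact (hg.hasDerivAt a).nonneg_of_forall_Ioo_le hlt fun t ht => ha ▸ (hpos t ht).le
    · exact (hg.hasDerivAt b).nonpos_of_forall_Ioo_le hlt fun t ht => hb ▸ (hpos t ht).le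
  rcases hab.forall_pos_or_forall_neg hh.continuous with hpos | hneg
  · exact key hh hne hab hpos
  · simpa [deriv.neg'] using key hh.neg (neg_ne_zero.2 hne) hab.neg fun t ht => by
      simpa using hneg t ht

end ConsecutiveZeros

namespace IsHillSolution

variable {q h : ℝ → ℝ}

theorem exists_consecutiveZeros (hh : IsHillSolution q h) {M : ℝ≥0} (hq : ∀ t, |q t| ≤ M)
    (hne : h ≠ 0) {T : ℝ} (hT : 0 < T) (hper : Function.Periodic h T) {a : ℝ} (ha : h a = 0) :
    ∃ b, ConsecutiveZeros h a b :=
  hh.continuous.exists_consecutiveZeros (lt_add_of_pos_right a hT) ha ((hper a).trans ha)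
    (((hh.hasDerivAt a).eventually_ne (hh.deriv_ne_zero_of_eq_zero hq hne ha)).filter_mono
      (nhdsGT_le_nhdsNE a))

theorem exists_seq_consecutiveZeros (hh : IsHillSolution q h) {M : ℝ≥0} (hq : ∀ t, |q t| ≤ M)
    (hne : h ≠ 0) {T : ℝ} (hT : 0 < T) (hper : Function.Periodic h T) {a : ℝ} (ha : h a = 0) :
    ∃ z : ℕ → ℝ, z 0 = a ∧ ∀ n, ConsecutiveZeros h (z n) (z (n + 1)) := by
  choose next hnext using fun b : {b // h b = 0} =>
    hh.exists_consecutiveZeros hq hne hT hper b.2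
  let step : {b // h b = 0} → {b // h b = 0} := fun b => ⟨next b, (hnext b).right⟩
  refine ⟨fun n => (step^[n] ⟨a, ha⟩).1, rfl, fun n => ?_⟩
  show ConsecutiveZeros h _ (step^[n + 1] _).1
  rw [Function.iterate_succ_apply']
  exact hnext _

end IsHillSolution

theorem no_nontrivial_solution_between_eigenvalues_general
    (r : ℕ) (hr : 1 ≤ r)
    (q : ℝ → ℝ)
    (hqlow : ∀ t : ℝ, ((r : ℝ) - 1) ^ 2 < q t)
    (hqhigh : ∀ t : ℝ, q t < (r : ℝ) ^ 2)
    (h : ℝ → ℝ) (hC2 : ContDiff ℝ 2 h)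
    (hper : Function.Periodic h (2 * π))
    (heq : ∀ t : ℝ, -(deriv (deriv h) t) = q t * h t) :
    ∀ t : ℝ, h t = 0 := by
  by_contra! ⟨t₀, ht₀⟩
  have hne : h ≠ 0 := fun h0 => ht₀ (congrFun h0 t₀)
  have hh : IsHillSolution q h := ⟨hC2.differentiable two_ne_zero, fun t =>
    ((hC2.deriv' (n := 1)).differentiable one_ne_zero t).hasDerivAt.congr_deriv
      (by rw [← heq t, neg_neg])⟩
  have hqpos : ∀ t, 0 < q t := fun t => (sq_nonneg _).trans_lt (hqlow t)
  obtain ⟨m, rfl⟩ : ∃ m, r = m + 1 := ⟨r - 1, by omega⟩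
  have hqM : ∀ t, |q t| ≤ (((m + 1) ^ 2 : ℝ≥0) : ℝ) := fun t => by
    push_cast at hqhigh ⊢
    exact (abs_of_pos (hqpos t)).trans_le (hqhigh t).le
  obtain ⟨a, ha⟩ := hh.exists_eq_zero hqpos two_pi_pos.ne' hper
  obtain ⟨z, rfl, hz⟩ := hh.exists_seq_consecutiveZeros hqM hne two_pi_pos hper ha
  have hright : z 0 + 2 * π < z (2 * m + 2) := by
    have := add_mul_lt_of_forall_add_lt
      (fun n => (hz n).add_pi_div_lt hh (by positivity) hqhigh) (2 * m + 2) (by omega)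
    push_cast at this
    field_simp at this ⊢
    linarith
  have hleft : z (2 * m) < z 0 + 2 * π := by
    rcases Nat.eq_zero_or_pos m with rfl | hm
    · simp [pi_pos]
    · have := lt_add_mul_of_forall_lt_add (fun n => (hz n).lt_add_pi_div hh (s := m)
        (by positivity) (by simpa using hqlow)) (2 * m) (by omega)
      push_cast at this
      field_simp at this ⊢
      linarith
  have hz_eq : z 0 + 2 * π = z (2 * m + 1) :=
    (hz (2 * m)).eq_of_lt_of_lt (hz (2 * m + 1)) ((hper _).trans (hz 0).left) hleft hright
  have hsign := neg_one_pow_mul_pos_of_forall_mul_neg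
    (fun n => (hz n).deriv_mul_deriv_neg hh hqM hne) (2 * m + 1)
  rw [← hz_eq, hper.deriv, pow_succ, pow_mul, neg_one_sq, one_pow] at hsign
  nlinarith [mul_self_nonneg (deriv h (z 0))]

/-- Non-degeneracy with a variable potential: if the continuous `2π`-periodic
potential `q` satisfies `(r-1)² < q(t) < r²` for all `t`, then the only `C²`
`2π`-periodic solution of `-h'' = q h` is the zero function. -/
theorem no_nontrivial_solution_between_eigenvalues
    (r : ℕ) (hr : 1 ≤ r)
    (q : ℝ → ℝ) (hqc : Continuous q) (hqper : Function.Periodic q (2 * π))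
    (hqlow : ∀ t : ℝ, ((r : ℝ) - 1) ^ 2 < q t)
    (hqhigh : ∀ t : ℝ, q t < (r : ℝ) ^ 2)
    (h : ℝ → ℝ) (hC2 : ContDiff ℝ 2 h)
    (hper : Function.Periodic h (2 * π))
    (heq : ∀ t : ℝ, -(deriv (deriv h) t) = q t * h t) :
    ∀ t : ℝ, h t = 0 :=
  no_nontrivial_solution_between_eigenvalues_general r hr q hqlow hqhigh h hC2 hper heq
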